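/- Let P and Q be probability measures on a measurable space X and let M := (1/2)·P + (1/2)·Q be their uniform mixture. Then TV(P, Q) ≤ √(KL(P ‖ M) + KL(Q ‖ M)), where KL denotes the Kullback–Leibler divergence. -/

import Mathlib

open MeasureTheory
open scoped ENNReal Classical

/-- Total variation distance between two measures:
`TV(μ, ν) = sup { |μ(A) − ν(A)| : A measurable }`. -/
noncomputable def tvDist {X : Type*} [MeasurableSpace X] (μ ν : Measure X) : ℝ :=
  ⨆ A : {A : Set X // MeasurableSet A}, |(μ A.1).toReal - (ν A.1).toReal|

/-- Kullback–Leibler divergence `KL(μ ‖ ν) = ∫ log(dμ/dν) dμ` when `μ ≪ ν` and the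
log-likelihood ratio is `μ`-integrable, and `∞` otherwise. -/
noncomputable def klDiv {X : Type*} [MeasurableSpace X] (μ ν : Measure X) : ℝ≥0∞ :=
  if μ ≪ ν ∧ Integrable (llr μ ν) μ then ENNReal.ofReal (∫ x, llr μ ν x ∂μ) else ⊤

lemma young_mul_log (x s : ℝ) (hx : 0 ≤ x) : s * x - Real.exp (s - 1) ≤ x * Real.log x := by
  rcases eq_or_lt_of_le hx with h | h
  · simp [← h]
    positivity
  · have h1 : s - 1 - Real.log x + 1 ≤ Real.exp (s - 1 - Real.log x) := Real.add_one_le_exp _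
    have h2 : Real.exp (s - 1 - Real.log x) = Real.exp (s - 1) / x := by
      rw [Real.exp_sub, Real.exp_log h]
    rw [h2] at h1
    have h3 : (s - Real.log x) * x ≤ Real.exp (s - 1) := by
      rw [← le_div_iff₀ h]; linarith
    nlinarith

lemma key_pointwise (x y c : ℝ) (hx : 0 ≤ x) (hy : 0 ≤ y) (hxy : x + y = 2) :
    c * (x - 1) - c ^ 2 / 4 ≤ x * Real.log x + y * Real.log y := by
  have h1 := young_mul_log x (1 + c / 2 - c ^ 2 / 8) hx
  have h2 := young_mul_log y (1 - c / 2 - c ^ 2 / 8) hy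
  have hcosh := Real.cosh_le_exp_half_sq (c / 2)
  rw [Real.cosh_eq] at hcosh
  have hepos : (0 : ℝ) < Real.exp (-(c ^ 2 / 8)) := Real.exp_pos _
  have he : Real.exp (1 + c / 2 - c ^ 2 / 8 - 1) + Real.exp (1 - c / 2 - c ^ 2 / 8 - 1) ≤ 2 := by
    have e1 : Real.exp (1 + c / 2 - c ^ 2 / 8 - 1) = Real.exp (c / 2) * Real.exp (-(c ^ 2 / 8)) := by
      rw [← Real.exp_add]; ring_nf
    have e2 : Real.exp (1 - c / 2 - c ^ 2 / 8 - 1) = Real.exp (-(c / 2)) * Real.exp (-(c ^ 2 / 8)) := by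
      rw [← Real.exp_add]; ring_nf
    have e3 : Real.exp ((c / 2) ^ 2 / 2) * Real.exp (-(c ^ 2 / 8)) = 1 := by
      rw [← Real.exp_add]; ring_nf; exact Real.exp_zero
    rw [e1, e2]
    nlinarith
  have hc : c * x + c * y = 2 * c := by linear_combination c * hxy
  have hc2 : c ^ 2 * x + c ^ 2 * y = 2 * c ^ 2 := by linear_combination c ^ 2 * hxy
  nlinarith

/-- Pinsker-type bound via the uniform mixture `M = ½P + ½Q`:
`TV(P, Q) ≤ √(KL(P‖M) + KL(Q‖M))`. -/
theorem tv_le_sqrt_kl_mixture {X : Type*} [MeasurableSpace X]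
    (P Q : Measure X) [IsProbabilityMeasure P] [IsProbabilityMeasure Q]
    (M : Measure X) (hM : M = (2 : ℝ≥0∞)⁻¹ • P + (2 : ℝ≥0∞)⁻¹ • Q) :
    ENNReal.ofReal (tvDist P Q) ≤ (klDiv P M + klDiv Q M) ^ ((1 : ℝ) / 2) := by
  classical
  have hMuniv : M Set.univ = 1 := by
    rw [hM]
    simp [measure_univ, ENNReal.inv_two_add_inv_two]
  haveI hMprob : IsProbabilityMeasure M := ⟨hMuniv⟩
  have hPQM : P + Q = (2 : ℝ≥0∞) • M := by
    rw [hM, smul_add, smul_smul, smul_smul,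
      ENNReal.mul_inv_cancel two_ne_zero ENNReal.ofNat_ne_top, one_smul, one_smul]
  have hPM : P ≪ M := by
    refine Measure.AbsolutelyContinuous.mk fun A hA h0 => ?_
    have h1 : P A + Q A = 0 := by
      have : (P + Q) A = ((2 : ℝ≥0∞) • M) A := by rw [hPQM]
      simpa [h0] using this
    exact (add_eq_zero.mp h1).1
  have hQM : Q ≪ M := by
    refine Measure.AbsolutelyContinuous.mk fun A hA h0 => ?_
    have h1 : P A + Q A = 0 := by
      have : (P + Q) A = ((2 : ℝ≥0∞) • M) A := by rw [hPQM]
      simpa [h0] using this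
    exact (add_eq_zero.mp h1).2
  by_cases hP : Integrable (llr P M) P
  swap
  · have hktop : klDiv P M = ⊤ := by rw [klDiv]; exact if_neg (fun h => hP h.2)
    rw [hktop, top_add, ENNReal.top_rpow_of_pos (by norm_num : (0:ℝ) < 1/2)]
    exact le_top
  by_cases hQ : Integrable (llr Q M) Q
  swap
  · have hktop : klDiv Q M = ⊤ := by rw [klDiv]; exact if_neg (fun h => hQ h.2)
    rw [hktop, add_top, ENNReal.top_rpow_of_pos (by norm_num : (0:ℝ) < 1/2)]
    exact le_top
  rw [klDiv, klDiv, if_pos ⟨hPM, hP⟩, if_pos ⟨hQM, hQ⟩]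
  set a := ∫ x, llr P M x ∂P with ha_def
  set b := ∫ x, llr Q M x ∂Q with hb_def
  set f : X → ℝ := fun x => (P.rnDeriv M x).toReal with hf_def
  set g : X → ℝ := fun x => (Q.rnDeriv M x).toReal with hg_def
  have hf_int : Integrable f M := Measure.integrable_toReal_rnDeriv
  have hg_int : Integrable g M := Measure.integrable_toReal_rnDeriv
  have hfg : ∀ᵐ x ∂M, f x + g x = 2 := by
    have h1 : ((2 : ℝ≥0∞) • M).rnDeriv M =ᵐ[M] P.rnDeriv M + Q.rnDeriv M := by
      rw [← hPQM]; exact Measure.rnDeriv_add P Q M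
    have h2 : ((2 : ℝ≥0∞) • M).rnDeriv M =ᵐ[M] (2 : ℝ≥0∞) • M.rnDeriv M :=
      Measure.rnDeriv_smul_left_of_ne_top M M ENNReal.ofNat_ne_top
    have h3 : M.rnDeriv M =ᵐ[M] fun _ => 1 := Measure.rnDeriv_self M
    filter_upwards [h1, h2, h3, Measure.rnDeriv_lt_top P M, Measure.rnDeriv_lt_top Q M]
      with x e1 e2 e3 hp hq
    have h4 : P.rnDeriv M x + Q.rnDeriv M x = 2 := by
      have h5 := e1.symm.trans e2
      simpa [Pi.add_apply, Pi.smul_apply, smul_eq_mul, e3] using h5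
    have : f x + g x = ((P.rnDeriv M x) + (Q.rnDeriv M x)).toReal :=
      (ENNReal.toReal_add hp.ne hq.ne).symm
    rw [this, h4]
    rfl
  have ha : a = ∫ x, f x * Real.log (f x) ∂M := by
    rw [ha_def, ← integral_rnDeriv_smul hPM (f := llr P M)]
    rfl
  have hb : b = ∫ x, g x * Real.log (g x) ∂M := by
    rw [hb_def, ← integral_rnDeriv_smul hQM (f := llr Q M)]
    rfl
  have hflogf : Integrable (fun x => f x * Real.log (f x)) M :=
    (integrable_rnDeriv_smul_iff hPM).mpr hP
  have hglogg : Integrable (fun x => g x * Real.log (g x)) M :=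
    (integrable_rnDeriv_smul_iff hQM).mpr hQ
  have key : ∀ A : Set X, MeasurableSet A → ((P A).toReal - (Q A).toReal) ^ 2 ≤ a + b := by
    intro A hA
    set t := (P A).toReal - (Q A).toReal with ht_def
    set c := 2 * t with hc_def
    set v : X → ℝ := fun x => f x - 1 with hv_def
    have hv_int : Integrable v M := hf_int.sub (integrable_const 1)
    set φ : X → ℝ := fun x => 2 * c * A.indicator v x - c * v x - c ^ 2 / 4 with hφ_def
    have hφ_int : Integrable φ M :=
      (((hv_int.indicator hA).const_mul _).sub (hv_int.const_mul c)).sub (integrable_const _)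
    have hmono : ∀ᵐ x ∂M, φ x ≤ f x * Real.log (f x) + g x * Real.log (g x) := by
      filter_upwards [hfg] with x hx
      by_cases hxA : x ∈ A
      · have h := key_pointwise (f x) (g x) c ENNReal.toReal_nonneg ENNReal.toReal_nonneg hx
        simp only [hφ_def, Set.indicator_of_mem hxA, hv_def]
        nlinarith [h]
      · have h := key_pointwise (f x) (g x) (-c) ENNReal.toReal_nonneg ENNReal.toReal_nonneg hx
        simp only [hφ_def, Set.indicator_of_notMem hxA, hv_def]
        nlinarith [h]
    have hint := integral_mono_ae hφ_int (hflogf.add hglogg) hmono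
    have hIv : ∫ x, v x ∂M = 0 := by
      rw [hv_def]
      rw [integral_sub hf_int (integrable_const 1), Measure.integral_toReal_rnDeriv hPM]
      simp [measure_univ]
    have hIAv : ∫ x, A.indicator v x ∂M = (P A).toReal - (M A).toReal := by
      rw [integral_indicator hA, hv_def,
        integral_sub hf_int.integrableOn (integrableOn_const (measure_ne_top M A)),
        Measure.setIntegral_toReal_rnDeriv hPM A]
      simp [Measure.real]
    have hMA : (M A).toReal = ((P A).toReal + (Q A).toReal) / 2 := by
      have h1 : M A = 2⁻¹ * P A + 2⁻¹ * Q A := by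
        rw [hM]; simp [Measure.add_apply]
      rw [h1, ENNReal.toReal_add, ENNReal.toReal_mul, ENNReal.toReal_mul]
      · simp; ring
      · exact ENNReal.mul_ne_top (by simp) (measure_ne_top P A)
      · exact ENNReal.mul_ne_top (by simp) (measure_ne_top Q A)
    have i1 : Integrable (fun x => 2 * c * A.indicator v x) M := (hv_int.indicator hA).const_mul _
    have i2 : Integrable (fun x => c * v x) M := hv_int.const_mul c
    have i3 : Integrable (fun x => 2 * c * A.indicator v x - c * v x) M := i1.sub i2
    have hIφ : ∫ x, φ x ∂M = c * t - c ^ 2 / 4 := by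
      rw [hφ_def]
      rw [integral_sub i3 (integrable_const _), integral_sub i1 i2,
        integral_const_mul, integral_const_mul, hIv, hIAv, integral_const]
      simp only [measure_univ, probReal_univ, ENNReal.toReal_one, one_smul, mul_zero, hMA]
      rw [ht_def]
      ring
    simp only [Pi.add_apply] at hint
    rw [hIφ, integral_add hflogf hglogg, ← ha, ← hb] at hint
    rw [hc_def] at hint
    ring_nf at hint ⊢
    linarith [hint]
  have hab : 0 ≤ a + b := by simpa using key ∅ MeasurableSet.empty
  haveI : Nonempty {A : Set X // MeasurableSet A} := ⟨⟨∅, MeasurableSet.empty⟩⟩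
  have htv : tvDist P Q ≤ Real.sqrt (a + b) := by
    refine ciSup_le fun A => ?_
    rw [← Real.sqrt_sq_eq_abs]
    exact Real.sqrt_le_sqrt (key A.1 A.2)
  calc ENNReal.ofReal (tvDist P Q) ≤ ENNReal.ofReal (Real.sqrt (a + b)) :=
        ENNReal.ofReal_le_ofReal htv
    _ = ENNReal.ofReal ((a + b) ^ ((1:ℝ)/2)) := by rw [Real.sqrt_eq_rpow]
    _ = (ENNReal.ofReal (a + b)) ^ ((1:ℝ)/2) :=
        (ENNReal.ofReal_rpow_of_nonneg hab (by norm_num)).symm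
    _ ≤ (ENNReal.ofReal a + ENNReal.ofReal b) ^ ((1:ℝ)/2) :=
        ENNReal.rpow_le_rpow ENNReal.ofReal_add_le (by norm_num)
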